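/- Let X ⊆ ℝ^m be a nonempty closed convex set, let ω : X → ℝ be continuously differentiable and σ-strongly convex with σ > 0, and define the Bregman divergence ν(a,b) = ω(b) − ω(a) − ⟨∇ω(a), b − a⟩ for a, b ∈ X. Let y ∈ X, g ∈ ℝ^m, α > 0, and let x⁺ be a minimizer over u ∈ X of ⟨g, u⟩ + (1/α) ν(y, u). Then for every x* ∈ X, ν(x⁺, x*) ≤ ν(y, x*) − α ⟨g, y − x*⟩ + (α²/(2σ)) ‖g‖². -/

import Mathlib

/-!
By first-order optimality of `x⁺` for the proximal objective, together with the three-point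
identity `ν(x⁺, x*) = ν(y, x*) - ν(y, x⁺) - ⟪∇ω x⁺ - ∇ω y, x* - x⁺⟫`, the claim reduces to
`α ⟪g, y - x⁺⟫ - ν(y, x⁺) ≤ α²/(2σ) ‖g‖²`. Strong monotonicity of `∇ω`, integrated along the
segment from `y` to `x⁺`, gives `ν(y, x⁺) ≥ σ/2 ‖x⁺ - y‖²`, and Young's inequality finishes.
-/

open scoped RealInnerProductSpace

variable {E : Type*} [NormedAddCommGroup E] [InnerProductSpace ℝ E]

section Bregman

def bregman (w : E → ℝ) (gradw : E → E) (a b : E) : ℝ := w b - w a - ⟪gradw a, b - a⟫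

theorem bregman_three_point (w : E → ℝ) (gradw : E → E) (a b c : E) :
    bregman w gradw b c =
      bregman w gradw a c - bregman w gradw a b - ⟪gradw b - gradw a, c - b⟫ := by
  simp only [bregman, inner_sub_left, inner_sub_right]
  ring

theorem real_inner_le_sq_div_add_sq {σ : ℝ} (hσ : 0 < σ) (g d : E) :
    ⟪g, d⟫ ≤ ‖g‖ ^ 2 / (2 * σ) + σ / 2 * ‖d‖ ^ 2 := by
  have h := sq_nonneg ‖g - σ • d‖
  rw [norm_sub_sq_real, inner_smul_right, norm_smul, Real.norm_of_nonneg hσ.le] at h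
  rw [div_add' _ _ _ (by positivity), le_div_iff₀ (by positivity)]
  nlinarith

end Bregman

section Gradient

variable [CompleteSpace E]

theorem HasGradientAt.add {f g : E → ℝ} {f' g' x : E} (hf : HasGradientAt f f' x)
    (hg : HasGradientAt g g' x) : HasGradientAt (fun u => f u + g u) (f' + g') x := by
  rw [hasGradientAt_iff_hasFDerivAt, map_add]
  exact HasFDerivAt.add hf hg

theorem HasGradientAt.sub {f g : E → ℝ} {f' g' x : E} (hf : HasGradientAt f f' x)
    (hg : HasGradientAt g g' x) : HasGradientAt (fun u => f u - g u) (f' - g') x := by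
  rw [hasGradientAt_iff_hasFDerivAt, map_sub]
  exact HasFDerivAt.sub hf hg

theorem HasGradientAt.const_mul {f : E → ℝ} {f' x : E} (hf : HasGradientAt f f' x) (c : ℝ) :
    HasGradientAt (fun u => c * f u) (c • f') x := by
  rw [hasGradientAt_iff_hasFDerivAt, map_smul]
  exact HasFDerivAt.const_smul hf c

theorem hasGradientAt_inner_right (g x : E) : HasGradientAt (fun u => ⟪g, u⟫) g x := by
  rw [hasGradientAt_iff_hasFDerivAt]
  exact (InnerProductSpace.toDual ℝ E g).hasFDerivAt

theorem HasGradientAt.hasDerivAt_comp_add_smul {w : E → ℝ} {w' a d : E} {t : ℝ}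
    (hw : HasGradientAt w w' (a + t • d)) :
    HasDerivAt (fun t : ℝ => w (a + t • d)) ⟪w', d⟫ t := by
  have hline : HasDerivAt (fun t : ℝ => a + t • d) d t :=
    (((hasDerivAt_id t).smul_const d).const_add a).congr_deriv (one_smul ℝ d)
  simpa [Function.comp_def] using hw.hasFDerivAt.comp_hasDerivAt t hline

theorem hasGradientAt_bregman_right {w : E → ℝ} {gradw : E → E} {b : E}
    (hw : HasGradientAt w (gradw b) b) (a : E) :
    HasGradientAt (bregman w gradw a) (gradw b - gradw a) b := by
  have h := (hw.sub (hasGradientAt_const b (w a))).sub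
    ((hasGradientAt_inner_right (gradw a) b).sub (hasGradientAt_const b ⟪gradw a, a⟫))
  simp only [sub_zero] at h
  convert h using 1
  ext u
  simp only [bregman, inner_sub_right]

theorem IsMinOn.inner_gradient_sub_nonneg {f : E → ℝ} {f' x u : E} {s : Set E}
    (hmin : IsMinOn f s x) (hs : Convex ℝ s) (hx : x ∈ s) (hu : u ∈ s)
    (hf : HasGradientAt f f' x) : 0 ≤ ⟪f', u - x⟫ := by
  simpa using hmin.localize.hasFDerivWithinAt_nonneg hf.hasFDerivAt.hasFDerivWithinAt
    (sub_mem_posTangentConeAt_of_segment_subset (hs.segment_subset hx hu))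

theorem half_mul_sq_norm_le_bregman {s : Set E} (hs : Convex ℝ s) {w : E → ℝ} {gradw : E → E}
    (hgrad : ∀ a ∈ s, HasGradientAt w (gradw a) a) {σ : ℝ}
    (hstrong : ∀ a ∈ s, ∀ b ∈ s, σ * ‖a - b‖ ^ 2 ≤ ⟪gradw a - gradw b, a - b⟫)
    {a b : E} (ha : a ∈ s) (hb : b ∈ s) : σ / 2 * ‖b - a‖ ^ 2 ≤ bregman w gradw a b := by
  set d := b - a
  have hmem : ∀ t ∈ Set.Icc (0 : ℝ) 1, a + t • d ∈ s := fun t ht => hs.add_smul_sub_mem ha hb ht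
  set ψ : ℝ → ℝ := fun t => w (a + t • d) - t * ⟪gradw a, d⟫ - σ / 2 * t ^ 2 * ‖d‖ ^ 2
  set ψ' : ℝ → ℝ := fun t => ⟪gradw (a + t • d) - gradw a, d⟫ - σ * t * ‖d‖ ^ 2
  have hψ : ∀ t ∈ Set.Icc (0 : ℝ) 1, HasDerivAt ψ (ψ' t) t := by
    intro t ht
    have h := (((hgrad _ (hmem t ht)).hasDerivAt_comp_add_smul).sub
      ((hasDerivAt_id t).mul_const ⟪gradw a, d⟫)).sub
      (((hasDerivAt_pow 2 t).const_mul (σ / 2)).mul_const (‖d‖ ^ 2))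
    refine h.congr_deriv ?_
    simp only [ψ', inner_sub_left, Nat.add_one_sub_one, pow_one, Nat.cast_ofNat]
    ring
  have hψ'_nonneg : ∀ t ∈ Set.Ioo (0 : ℝ) 1, 0 ≤ ψ' t := by
    intro t ht
    have h := hstrong _ (hmem t (Set.Ioo_subset_Icc_self ht)) a ha
    rw [add_sub_cancel_left, inner_smul_right, norm_smul, Real.norm_of_nonneg ht.1.le] at h
    nlinarith [ht.1]
  have hmono : MonotoneOn ψ (Set.Icc 0 1) := by
    refine monotoneOn_of_hasDerivWithinAt_nonneg (f' := ψ') (convex_Icc 0 1)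
      (fun t ht => (hψ t ht).continuousAt.continuousWithinAt) (fun t ht => ?_) (fun t ht => ?_)
    all_goals rw [interior_Icc] at ht
    · exact (hψ t (Set.Ioo_subset_Icc_self ht)).hasDerivWithinAt
    · exact hψ'_nonneg t ht
  have h01 := hmono (Set.left_mem_Icc.2 zero_le_one) (Set.right_mem_Icc.2 zero_le_one) zero_le_one
  simp only [ψ, zero_smul, add_zero, zero_mul, sub_zero, one_smul, add_sub_cancel, one_mul, d]
    at h01
  simp only [bregman]
  linarith

theorem IsMinOn.bregman_prox_optimality {s : Set E} (hs : Convex ℝ s) {w : E → ℝ}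
    {gradw : E → E} {g y x u : E} {α : ℝ} (hα : 0 < α)
    (hmin : IsMinOn (fun v => ⟪g, v⟫ + 1 / α * bregman w gradw y v) s x)
    (hw : HasGradientAt w (gradw x) x) (hx : x ∈ s) (hu : u ∈ s) :
    0 ≤ α * ⟪g, u - x⟫ + ⟪gradw x - gradw y, u - x⟫ := by
  have hobj := (hasGradientAt_inner_right g x).add
    ((hasGradientAt_bregman_right hw y).const_mul (1 / α))
  have h := mul_nonneg hα.le (hmin.inner_gradient_sub_nonneg hs hx hu hobj)
  rwa [inner_add_left, real_inner_smul_left, mul_add, ← mul_assoc, mul_one_div_cancel hα.ne',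
    one_mul] at h

end Gradient

theorem prox_step_descent_general {m : ℕ}
    (X : Set (EuclideanSpace ℝ (Fin m)))
    (hXconvex : Convex ℝ X)
    (w : EuclideanSpace ℝ (Fin m) → ℝ)
    (gradw : EuclideanSpace ℝ (Fin m) → EuclideanSpace ℝ (Fin m))
    (hgrad : ∀ a ∈ X, HasGradientAt w (gradw a) a)
    (σ : ℝ) (hσ : 0 < σ)
    (hstrong : ∀ a ∈ X, ∀ b ∈ X, σ * ‖a - b‖ ^ 2 ≤ ⟪gradw a - gradw b, a - b⟫)
    (ν : EuclideanSpace ℝ (Fin m) → EuclideanSpace ℝ (Fin m) → ℝ)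
    (hν : ∀ a b, ν a b = w b - w a - ⟪gradw a, b - a⟫)
    (y : EuclideanSpace ℝ (Fin m)) (hy : y ∈ X)
    (g : EuclideanSpace ℝ (Fin m)) (α : ℝ) (hα : 0 < α)
    (xp : EuclideanSpace ℝ (Fin m)) (hxpX : xp ∈ X)
    (hxpmin : ∀ u ∈ X, ⟪g, xp⟫ + (1 / α) * ν y xp ≤ ⟪g, u⟫ + (1 / α) * ν y u) :
    ∀ xstar ∈ X, ν xp xstar ≤ ν y xstar - α * ⟪g, y - xstar⟫ + α ^ 2 / (2 * σ) * ‖g‖ ^ 2 := by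
  intro xstar hxstar
  obtain rfl : ν = bregman w gradw := funext₂ hν
  have hopt := (isMinOn_iff.2 hxpmin).bregman_prox_optimality hXconvex hα (hgrad xp hxpX) hxpX
    hxstar
  have hsplit : ⟪g, xstar - xp⟫ = ⟪g, y - xp⟫ - ⟪g, y - xstar⟫ := by
    rw [← inner_sub_right, sub_sub_sub_cancel_left]
  have hlow := half_mul_sq_norm_le_bregman hXconvex hgrad hstrong hy hxpX
  have hyoung := real_inner_le_sq_div_add_sq hσ (α • g) (y - xp)
  rw [real_inner_smul_left, norm_smul, mul_pow, Real.norm_eq_abs, sq_abs, norm_sub_rev] at hyoung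
  rw [bregman_three_point w gradw y xp xstar]
  linear_combination hopt + hlow + hyoung + α * hsplit

/-- **Proximal step descent inequality.**  Let `X ⊆ ℝ^m` be nonempty closed convex,
`ω : X → ℝ` continuously differentiable and `σ`-strongly convex
(`⟨∇ω(a) − ∇ω(b), a − b⟩ ≥ σ‖a−b‖²` on `X`), with Bregman divergence
`ν(a,b) = ω(b) − ω(a) − ⟨∇ω(a), b − a⟩`.  If `y ∈ X`, `g ∈ ℝ^m`, `α > 0` and `x⁺`
minimizes `⟨g,u⟩ + (1/α) ν(y,u)` over `u ∈ X`, then for every `x* ∈ X`,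
`ν(x⁺, x*) ≤ ν(y, x*) − α ⟨g, y − x*⟩ + (α²/(2σ)) ‖g‖²`. -/
theorem prox_step_descent {m : ℕ}
    (X : Set (EuclideanSpace ℝ (Fin m)))
    (hXne : X.Nonempty) (hXclosed : IsClosed X) (hXconvex : Convex ℝ X)
    (w : EuclideanSpace ℝ (Fin m) → ℝ)
    (gradw : EuclideanSpace ℝ (Fin m) → EuclideanSpace ℝ (Fin m))
    (hgrad : ∀ a ∈ X, HasGradientAt w (gradw a) a)
    (hgradcont : ContinuousOn gradw X)
    (σ : ℝ) (hσ : 0 < σ)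
    (hstrong : ∀ a ∈ X, ∀ b ∈ X, σ * ‖a - b‖ ^ 2 ≤ ⟪gradw a - gradw b, a - b⟫)
    (ν : EuclideanSpace ℝ (Fin m) → EuclideanSpace ℝ (Fin m) → ℝ)
    (hν : ∀ a b, ν a b = w b - w a - ⟪gradw a, b - a⟫)
    (y : EuclideanSpace ℝ (Fin m)) (hy : y ∈ X)
    (g : EuclideanSpace ℝ (Fin m)) (α : ℝ) (hα : 0 < α)
    (xp : EuclideanSpace ℝ (Fin m)) (hxpX : xp ∈ X)
    (hxpmin : ∀ u ∈ X, ⟪g, xp⟫ + (1 / α) * ν y xp ≤ ⟪g, u⟫ + (1 / α) * ν y u) :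
    ∀ xstar ∈ X, ν xp xstar ≤ ν y xstar - α * ⟪g, y - xstar⟫ + α ^ 2 / (2 * σ) * ‖g‖ ^ 2 :=
  prox_step_descent_general X hXconvex w gradw hgrad σ hσ hstrong ν hν y hy g α hα xp hxpX hxpmin
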